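/- arXiv:1503.05339 — 4 statements merged into one kernel-verified Lean document; each statement's English description precedes it below -/
import Mathlib

section
/- Let L ≥ 3. For every perfect matching σ of the hexagonal torus T_L, the sum over all beads b of σ of |I⁺_b(σ)| equals the sum over all beads b of σ of |I⁻_b(σ)| (the total number of single-bead up-jumps available from σ equals the total number of single-bead down-jumps available from σ). -/
/-!
Dimer coverings (perfect matchings) of the hexagonal torus `T_L`, beads, elementary
moves, and the sets `I⁺_b`, `I⁻_b` of positions available above/below a bead.

Statement-specific material follows the common setup below.

-/

namespace HexDimer

variable (L : ℕ)

/-- Positions `x ∈ (ℤ/Lℤ)²` indexing the white vertices `w_x`, the black vertices `b_x`,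
and the horizontal edges (hence the faces / possible bead positions). -/
abbrev Pos := ZMod L × ZMod L

/-- An edge of the hexagonal torus is encoded by its white endpoint `x` together with a
direction `d : Fin 3`: `d = 0` is the horizontal edge `{w_x, b_x}`, `d = 1` is
`{w_x, b_{x+(1,0)}}`, `d = 2` is `{w_x, b_{x+(0,1)}}`. -/
abbrev Edge := Pos L × Fin 3

/-- The displacement of the black endpoint of an edge in direction `d`. -/
def dvec : Fin 3 → Pos L := ![(0, 0), (1, 0), (0, 1)]

/-- A configuration: a (finite) set of edges. -/
abbrev Config := Finset (Edge L)

/-- `σ` is a perfect matching of the hexagonal torus: every white vertex `w_x` and every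
black vertex `b_x` belongs to exactly one edge of `σ`. -/
def IsPM (σ : Config L) : Prop :=
  (∀ x : Pos L, ∃! d : Fin 3, (x, d) ∈ σ) ∧
  (∀ x : Pos L, ∃! e : Edge L, e ∈ σ ∧ e.1 + dvec L e.2 = x)

/-- The upward shift `(1,-1)` along a column. -/
def u : Pos L := (1, -1)

/-- The set of beads (horizontal dimers) of `σ`, recorded by their positions. -/
def beadPos (σ : Config L) : Finset (Pos L) :=
  (σ.filter (fun e => e.2 = 0)).image Prod.fst

/-- The alternating triple of edges of the face `F_x` containing the lower horizontal
edge `{w_x, b_x}`: the edges `(x,0)`, `(x+(1,-1),2)` and `(x-(0,1),1)`. -/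
def lowTriple (x : Pos L) : Finset (Edge L) :=
  {(x, 0), (x + u L, 2), (x - (0, 1), 1)}

/-- The alternating triple of edges of the face `F_x` containing the upper horizontal
edge `{w_{x+(1,-1)}, b_{x+(1,-1)}}`: the edges `(x,1)`, `(x+(1,-1),0)` and `(x-(0,1),2)`. -/
def highTriple (x : Pos L) : Finset (Edge L) :=
  {(x, 1), (x + u L, 0), (x - (0, 1), 2)}

/-- The elementary up-move at the face `F_x` is allowed: `σ` contains the alternating
triple through the lower horizontal edge of `F_x` (in particular there is a bead at `x`). -/
def CanUp (σ : Config L) (x : Pos L) : Prop := lowTriple L x ⊆ σ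

/-- The configuration after the elementary up-move at `F_x`: the three dimers of the low
triple are rotated onto the high triple; the bead at `x` moves up to `x + (1,-1)`. -/
def upMove (σ : Config L) (x : Pos L) : Config L := (σ \ lowTriple L x) ∪ highTriple L x

/-- The elementary down-move bringing the bead at `x` down to `x - (1,-1)` is allowed. -/
def CanDown (σ : Config L) (x : Pos L) : Prop := highTriple L (x - u L) ⊆ σ

/-- The configuration after the elementary down-move of the bead at `x`. -/
def downMove (σ : Config L) (x : Pos L) : Config L :=
  (σ \ highTriple L (x - u L)) ∪ lowTriple L (x - u L)

/-- `UpPath σ x y σ'` holds if, starting from `σ` with a bead at `x`, a concatenation of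
elementary up-moves (each moving this bead and no other bead) brings the bead to
position `y`, the configuration becoming `σ'`. -/
inductive UpPath : Config L → Pos L → Pos L → Config L → Prop
  | refl (σ : Config L) (x : Pos L) : UpPath σ x x σ
  | step {σ : Config L} {x y : Pos L} {σ' : Config L} :
      CanUp L σ x → UpPath (upMove L σ x) (x + u L) y σ' → UpPath σ x y σ'

/-- `DownPath σ x y σ'`: a concatenation of elementary down-moves of a single bead brings
it from `x` to `y`, the configuration becoming `σ'`. -/
inductive DownPath : Config L → Pos L → Pos L → Config L → Prop
  | refl (σ : Config L) (x : Pos L) : DownPath σ x x σ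
  | step {σ : Config L} {x y : Pos L} {σ' : Config L} :
      CanDown L σ x → DownPath (downMove L σ x) (x - u L) y σ' → DownPath σ x y σ'

/-- `I⁺_b(σ)`: the set of positions available above the bead at `x`. -/
def Iplus (σ : Config L) (x : Pos L) : Set (Pos L) :=
  {y | y ≠ x ∧ ∃ σ' : Config L, UpPath L σ x y σ'}

/-- `I⁻_b(σ)`: the set of positions available below the bead at `x`. -/
def Iminus (σ : Config L) (x : Pos L) : Set (Pos L) :=
  {y | y ≠ x ∧ ∃ σ' : Config L, DownPath L σ x y σ'}

/-!
Call `v` an up-slot of `σ` if a bead at `v - u` could step up to `v` (the two other edges of the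
face between them are dimers), and a down-slot if a bead at `v + u` could step down to `v`.
A bead moving up never changes the up-slots further up its column, so `I⁺_b` is the run of
up-slots directly above `b`. In a perfect matching the position below an up-slot is a bead or
again an up-slot; hence, when every column carries a bead, these runs partition the up-slots and
`∑ |I⁺_b|` is the number of up-slots. The point reflection of the torus exchanging the two colours
turns up-moves into down-moves and down-slots into up-slots, so likewise `∑ |I⁻_b|` is the number
of down-slots. Up-slots are the `v` with `(v, 2) ∈ σ` and `(v - (0, 1), 2) ∉ σ`, down-slots those
with the two conditions exchanged, so the two counts agree by translation invariance. Finally, a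
column without beads forces the next column to be bead-free, so otherwise there are no beads.
-/

open Finset

lemma _root_.Fin.eq_zero_or_eq_one_or_eq_two (d : Fin 3) : d = 0 ∨ d = 1 ∨ d = 2 := by
  fin_cases d <;> simp

lemma _root_.Finset.card_filter_and_not_sub {G : Type*} [AddGroup G] [Fintype G] [DecidableEq G]
    (p : G → Prop) [DecidablePred p] (t : G) :
    #{v | p v ∧ ¬p (v - t)} = #{v | p (v - t) ∧ ¬p v} := by
  have hshift : #{v | p v} = #{v | p (v - t)} :=
    card_nbij' (· + t) (· - t) (by intro v; simp) (by intro v; simp)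
      (by intro v _; simp) (by intro v _; simp)
  rw [filter_and_not, filter_and_not, card_sdiff_comm hshift]

section

variable {L}

section Columns

/-- Column `ℓ` consists of the horizontal edges `(x, 0)` with `col x = ℓ`. -/
def col : Pos L →+ ZMod L := AddMonoidHom.fst _ _ + AddMonoidHom.snd _ _

@[simp] lemma col_apply (x : Pos L) : col x = x.1 + x.2 := rfl

@[simp] lemma dvec_zero : dvec L 0 = 0 := rfl
@[simp] lemma dvec_one : dvec L 1 = (1, 0) := rfl
@[simp] lemma dvec_two : dvec L 2 = (0, 1) := rfl

lemma nsmul_u (k : ℕ) : k • u L = ((k : ZMod L), -(k : ZMod L)) := by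
  simp [u, Prod.smul_mk]

lemma col_u : col (u L) = 0 := by
  simp [u]

lemma col_add_nsmul_u (x : Pos L) (k : ℕ) : col (x + k • u L) = col x := by
  rw [map_add, map_nsmul, col_u, smul_zero, add_zero]

lemma col_one_zero : col ((1, 0) : Pos L) = 1 := by simp

lemma col_zero_one : col ((0, 1) : Pos L) = 1 := by simp

lemma ne_sub_of_col_eq [Fact (1 < L)] {x y e : Pos L} (h : col x = col y) (he : col e = 1) :
    x ≠ y - e := by
  rintro rfl
  rw [map_sub, he, sub_eq_self] at h
  exact one_ne_zero h

lemma nsmul_u_inj {i j : ℕ} (hi : i < L) (hj : j < L) : i • u L = j • u L ↔ i = j := by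
  refine ⟨fun h => ?_, fun h => h ▸ rfl⟩
  rw [nsmul_u, nsmul_u] at h
  have h₁ := congrArg (fun p : Pos L => p.1.val) h
  simpa [ZMod.val_natCast_of_lt hi, ZMod.val_natCast_of_lt hj] using h₁

lemma add_nsmul_u_ne {i j : ℕ} (hi : i < L) (hj : j < L) (hij : i ≠ j) (x : Pos L) :
    x + i • u L ≠ x + j • u L :=
  fun h => hij ((nsmul_u_inj hi hj).1 (add_left_cancel h))

lemma add_succ_nsmul_u (x : Pos L) (j : ℕ) : x + (j + 1) • u L = x + j • u L + u L := by
  rw [succ_nsmul, add_assoc]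

lemma nsmul_u_self : L • u L = 0 := by
  rw [nsmul_u, ZMod.natCast_self, neg_zero]; rfl

lemma add_u_sub_one_zero (x : Pos L) : x + u L - (1, 0) = x - (0, 1) := by
  ext <;> simp [u, sub_eq_add_neg]

lemma exists_eq_add_nsmul_u [NeZero L] {x y : Pos L} (h : col x = col y) :
    ∃ k < L, y = x + k • u L := by
  refine ⟨(y.1 - x.1).val, ZMod.val_lt _, ?_⟩
  rw [col_apply, col_apply] at h
  rw [nsmul_u]
  ext
  · simp
  · simp; linear_combination -h

end Columns

namespace IsPM

variable {σ : Config L} (hσ : IsPM L σ)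
include hσ

lemma exists_mem_white (x : Pos L) : ∃ d, (x, d) ∈ σ := (hσ.1 x).exists

lemma exists_mem_black (y : Pos L) : ∃ d, (y - dvec L d, d) ∈ σ := by
  obtain ⟨e, ⟨he, rfl⟩, -⟩ := hσ.2 y
  exact ⟨e.2, by simpa using he⟩

lemma dir_eq_of_mem {x : Pos L} {d d' : Fin 3} (h : (x, d) ∈ σ) (h' : (x, d') ∈ σ) : d = d' :=
  (hσ.1 x).unique h h'

lemma dir_eq_of_black_eq {x x' : Pos L} {d d' : Fin 3} (h : (x, d) ∈ σ) (h' : (x', d') ∈ σ)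
    (hb : x + dvec L d = x' + dvec L d') : d = d' :=
  congrArg Prod.snd ((hσ.2 _).unique ⟨h, rfl⟩ ⟨h', hb.symm⟩)

end IsPM

section Slots

variable {σ : Config L} {v x : Pos L}

def UpSlot (σ : Config L) (v : Pos L) : Prop := (v, 2) ∈ σ ∧ (v - (1, 0), 1) ∈ σ

def DownSlot (σ : Config L) (v : Pos L) : Prop := (v, 1) ∈ σ ∧ (v - (0, 1), 2) ∈ σ

def HasBeadInEveryColumn (σ : Config L) : Prop := ∀ c, ∃ b, (b, 0) ∈ σ ∧ col b = c

lemma mem_beadPos : x ∈ beadPos L σ ↔ (x, 0) ∈ σ := by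
  simp [beadPos]

lemma canUp_iff : CanUp L σ x ↔ (x, 0) ∈ σ ∧ UpSlot σ (x + u L) := by
  simp [CanUp, lowTriple, UpSlot, insert_subset_iff, add_u_sub_one_zero]

variable (hσ : IsPM L σ)
include hσ

lemma not_upSlot_of_mem (h : (v, 0) ∈ σ) : ¬UpSlot σ v :=
  fun hv => absurd (hσ.dir_eq_of_mem h hv.1) (by decide)

lemma mem_or_upSlot_sub_u (hv : UpSlot σ v) : (v - u L, 0) ∈ σ ∨ UpSlot σ (v - u L) := by
  obtain ⟨d, hd⟩ := hσ.exists_mem_white (v - u L)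
  rcases Fin.eq_zero_or_eq_one_or_eq_two d with rfl | rfl | rfl
  · exact .inl hd
  · refine absurd (hσ.dir_eq_of_black_eq hd hv.1 ?_) (by decide)
    ext <;> simp [u]
  obtain ⟨d', hd'⟩ := hσ.exists_mem_black (v - u L)
  rcases Fin.eq_zero_or_eq_one_or_eq_two d' with rfl | rfl | rfl
  · exact .inl (by simpa using hd')
  · exact .inr ⟨hd, hd'⟩
  · have h : (v - (1, 0), 2) ∈ σ := by
      convert hd' using 2
      ext <;> simp [u]
    exact absurd (hσ.dir_eq_of_mem hv.2 h) (by decide)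

lemma upSlot_iff : UpSlot σ v ↔ (v, 2) ∈ σ ∧ (v - (0, 1), 2) ∉ σ := by
  refine ⟨fun hv => ⟨hv.1, fun h => ?_⟩, fun ⟨h₂, hn⟩ => ⟨h₂, ?_⟩⟩
  · exact absurd (hσ.dir_eq_of_black_eq hv.2 h (by simp)) (by decide)
  obtain ⟨d, hd⟩ := hσ.exists_mem_black v
  rcases Fin.eq_zero_or_eq_one_or_eq_two d with rfl | rfl | rfl
  · exact absurd (hσ.dir_eq_of_mem h₂ (by simpa using hd)) (by decide)
  · simpa using hd
  · exact absurd hd hn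

lemma downSlot_iff : DownSlot σ v ↔ (v - (0, 1), 2) ∈ σ ∧ (v, 2) ∉ σ := by
  refine ⟨fun hv => ⟨hv.2, fun h => absurd (hσ.dir_eq_of_mem hv.1 h) (by decide)⟩,
    fun ⟨h₂, hn⟩ => ⟨?_, h₂⟩⟩
  obtain ⟨d, hd⟩ := hσ.exists_mem_white v
  rcases Fin.eq_zero_or_eq_one_or_eq_two d with rfl | rfl | rfl
  · exact absurd (hσ.dir_eq_of_black_eq hd h₂ (by simp)) (by decide)
  · exact hd
  · exact absurd hd hn

open scoped Classical in
lemma card_upSlot_eq_card_downSlot [NeZero L] : #{v | UpSlot σ v} = #{v | DownSlot σ v} := by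
  simp_rw [upSlot_iff hσ, downSlot_iff hσ]
  exact card_filter_and_not_sub (fun v => (v, 2) ∈ σ) (0, 1)

end Slots

section UpPaths

variable {σ τ τ' : Config L} {x y z : Pos L} {j k : ℕ}

lemma mem_upMove_of_ne {p : Pos L} {d : Fin 3} (h₀ : p ≠ z) (h₁ : p ≠ z + u L)
    (h₂ : p ≠ z - (0, 1)) : (p, d) ∈ upMove L τ z ↔ (p, d) ∈ τ := by
  simp [upMove, lowTriple, highTriple, h₀, h₁, h₂]

/-- The invariant of a bead that started at `x` in `σ` and has moved up `j` steps, giving `τ`.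
The second clause is what stops the bead after `L - 1` steps. -/
def MovedUp (σ τ : Config L) (x : Pos L) (j : ℕ) : Prop :=
  (x + j • u L, 0) ∈ τ ∧ (x, 2) ∉ τ ∧
    ∀ i, j < i → i < L → (UpSlot τ (x + i • u L) ↔ UpSlot σ (x + i • u L))

lemma movedUp_zero (hσ : IsPM L σ) (hx : (x, 0) ∈ σ) : MovedUp σ σ x 0 :=
  ⟨by simpa using hx, fun h => absurd (hσ.dir_eq_of_mem hx h) (by decide), fun _ _ _ => Iff.rfl⟩

variable [Fact (1 < L)]

lemma MovedUp.step (h : MovedUp σ τ x j) (hj : j + 1 < L) :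
    MovedUp σ (upMove L τ (x + j • u L)) x (j + 1) := by
  obtain ⟨hbead, hx, hslots⟩ := h
  set z := x + j • u L with hz
  have hcol : ∀ i : ℕ, col (x + i • u L) = col z := fun i => by
    simp only [hz, col_add_nsmul_u]
  refine ⟨?_, ?_, fun i hi hiL => ?_⟩
  · rw [add_succ_nsmul_u]
    exact mem_union_right _ (mem_insert_of_mem (mem_insert_self _ _))
  · have hxz : x ≠ z - (0, 1) := ne_sub_of_col_eq (by simpa using hcol 0) col_zero_one
    simp [upMove, highTriple, hx, hxz]
  have hi₀ : x + i • u L ≠ z := add_nsmul_u_ne hiL (by omega) (by omega) x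
  have hi₁ : x + i • u L ≠ z + u L := by
    rw [hz, ← add_succ_nsmul_u]; exact add_nsmul_u_ne hiL hj (by omega) x
  have hi₂ : x + i • u L ≠ z - (0, 1) := ne_sub_of_col_eq (hcol i) col_zero_one
  have hi₃ : x + i • u L - (1, 0) ≠ z :=
    fun h => ne_sub_of_col_eq (hcol i).symm col_one_zero h.symm
  have hi₄ : x + i • u L - (1, 0) ≠ z + u L := fun h =>
    ne_sub_of_col_eq (by rw [hcol i, map_add, col_u, add_zero]) col_one_zero h.symm
  have hi₅ : x + i • u L - (1, 0) ≠ z - (0, 1) := by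
    rw [← add_u_sub_one_zero, hz, ← add_succ_nsmul_u, Ne, sub_left_inj]
    exact add_nsmul_u_ne hiL hj (by omega) x
  rw [← hslots i (by omega) hiL, UpSlot, UpSlot, mem_upMove_of_ne hi₀ hi₁ hi₂,
    mem_upMove_of_ne hi₃ hi₄ hi₅]

lemma UpPath.exists_eq_add_nsmul_u (hp : UpPath L τ z y τ') (h : MovedUp σ τ x j)
    (hz : z = x + j • u L) (hj : j < L) : ∃ m, j ≤ m ∧ m < L ∧
      (∀ i, j < i → i ≤ m → UpSlot σ (x + i • u L)) ∧ y = x + m • u L := by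
  induction hp generalizing j with
  | refl => exact ⟨j, le_rfl, hj, fun i hi hi' => by omega, hz⟩
  | step hcan _ ih =>
    subst hz
    have hslot := (canUp_iff.1 hcan).2
    rw [← add_succ_nsmul_u] at hslot
    obtain hj' | hj' := Nat.lt_or_ge (j + 1) L
    · obtain ⟨m, hjm, hm, hrun, rfl⟩ := ih (h.step hj') (add_succ_nsmul_u x j).symm hj'
      refine ⟨m, by omega, hm, fun i hi hi' => ?_, rfl⟩
      obtain rfl | hi := eq_or_lt_of_le (Nat.succ_le_of_lt hi)
      · exact (h.2.2 (j + 1) (by omega) hj').1 hslot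
      · exact hrun i hi hi'
    · rw [show j + 1 = L by omega, nsmul_u_self, add_zero] at hslot
      exact absurd hslot.1 h.2.1

lemma MovedUp.exists_upPath (h : MovedUp σ τ x j) (hk : j + k < L)
    (hrun : ∀ i, j < i → i ≤ j + k → UpSlot σ (x + i • u L)) :
    ∃ τ', UpPath L τ (x + j • u L) (x + (j + k) • u L) τ' := by
  induction k generalizing j τ with
  | zero => exact ⟨τ, .refl _ _⟩
  | succ k ih =>
    have hslot : UpSlot τ (x + j • u L + u L) := by
      rw [← add_succ_nsmul_u]
      exact (h.2.2 (j + 1) (by omega) (by omega)).2 (hrun (j + 1) (by omega) (by omega))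
    obtain ⟨τ', hp⟩ :=
      ih (h.step (by omega)) (by omega) (fun i hi hi' => hrun i (by omega) (by omega))
    refine ⟨τ', .step (canUp_iff.2 ⟨h.1, hslot⟩) ?_⟩
    rwa [← add_succ_nsmul_u, show j + (k + 1) = j + 1 + k by omega]

def UpRun (σ : Config L) (x : Pos L) (j : ℕ) : Prop :=
  ∀ i, 0 < i → i ≤ j → UpSlot σ (x + i • u L)

theorem mem_Iplus_iff (hσ : IsPM L σ) (hx : (x, 0) ∈ σ) :
    y ∈ Iplus L σ x ↔ ∃ j, 0 < j ∧ j < L ∧ UpRun σ x j ∧ y = x + j • u L := by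
  have hL : 1 < L := Fact.out
  constructor
  · rintro ⟨hne, τ', hp⟩
    obtain ⟨m, -, hm, hrun, rfl⟩ :=
      hp.exists_eq_add_nsmul_u (movedUp_zero hσ hx) (by simp) (by omega)
    have hm₀ : m ≠ 0 := by rintro rfl; simp at hne
    exact ⟨m, by omega, hm, hrun, rfl⟩
  · rintro ⟨j, hj₀, hj, hrun, rfl⟩
    refine ⟨by simpa using add_nsmul_u_ne hj (by omega : 0 < L) (by omega) x, ?_⟩
    simpa using (movedUp_zero hσ hx).exists_upPath (k := j) (by omega)
      (fun i hi hi' => hrun i hi (by omega))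

end UpPaths

section Counting

variable {σ : Config L} {b b' v y : Pos L} (hσ : IsPM L σ)
include hσ

lemma eq_of_add_nsmul_u_eq {j j' : ℕ} (hb : (b, 0) ∈ σ) (hrun : UpRun σ b' j') (hjj : j ≤ j')
    (h : b + j • u L = b' + j' • u L) : b = b' := by
  have hb' : b = b' + (j' - j) • u L := by
    rw [← Nat.sub_add_cancel hjj, add_nsmul, ← add_assoc] at h
    exact add_right_cancel h
  obtain h₀ | hpos := Nat.eq_zero_or_pos (j' - j)
  · simpa [h₀] using hb'
  · exact absurd (hb' ▸ hrun (j' - j) hpos (Nat.sub_le _ _)) (not_upSlot_of_mem hσ hb)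

lemma exists_upRun_of_upSlot {b₀ : Pos L} (hb₀ : (b₀, 0) ∈ σ) (k : ℕ) (hv : v = b₀ + k • u L)
    (hslot : UpSlot σ v) : ∃ b j, (b, 0) ∈ σ ∧ 0 < j ∧ j ≤ k ∧ UpRun σ b j ∧ v = b + j • u L := by
  induction k generalizing v with
  | zero =>
    subst hv
    exact absurd (by simpa using hslot) (not_upSlot_of_mem hσ hb₀)
  | succ k ih =>
    rcases mem_or_upSlot_sub_u hσ hslot with hbead | hslot'
    · refine ⟨v - u L, 1, hbead, one_pos, by omega, fun i hi hi' => ?_, by simp⟩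
      obtain rfl : i = 1 := by omega
      simpa using hslot
    obtain ⟨b, j, hb, hj₀, hjk, hrun, hvb⟩ :=
      ih (by rw [hv, add_succ_nsmul_u, add_sub_cancel_right]) hslot'
    have hv' : v = b + (j + 1) • u L := by rw [add_succ_nsmul_u, ← hvb, sub_add_cancel]
    refine ⟨b, j + 1, hb, by omega, by omega, fun i hi hi' => ?_, hv'⟩
    obtain hi' | rfl := Nat.lt_or_eq_of_le hi'
    · exact hrun i hi (by omega)
    · exact hv' ▸ hslot

variable [Fact (1 < L)]

lemma upSlot_of_mem_Iplus (hb : (b, 0) ∈ σ) (hy : y ∈ Iplus L σ b) : UpSlot σ y := by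
  obtain ⟨j, hj₀, -, hrun, rfl⟩ := (mem_Iplus_iff hσ hb).1 hy
  exact hrun j hj₀ le_rfl

lemma eq_of_mem_Iplus (hb : (b, 0) ∈ σ) (hb' : (b', 0) ∈ σ) (hy : y ∈ Iplus L σ b)
    (hy' : y ∈ Iplus L σ b') : b = b' := by
  obtain ⟨j, -, -, hrun, rfl⟩ := (mem_Iplus_iff hσ hb).1 hy
  obtain ⟨j', -, -, hrun', h⟩ := (mem_Iplus_iff hσ hb').1 hy'
  rcases le_total j j' with hjj | hjj
  · exact eq_of_add_nsmul_u_eq hσ hb hrun' hjj h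
  · exact (eq_of_add_nsmul_u_eq hσ hb' hrun hjj h.symm).symm

lemma exists_mem_Iplus_of_upSlot (hcols : HasBeadInEveryColumn σ) (hv : UpSlot σ v) :
    ∃ b, (b, 0) ∈ σ ∧ v ∈ Iplus L σ b := by
  obtain ⟨b₀, hb₀, hcol⟩ := hcols (col v)
  obtain ⟨k, hk, rfl⟩ := exists_eq_add_nsmul_u hcol
  obtain ⟨b, j, hb, hj₀, hjk, hrun, hv⟩ := exists_upRun_of_upSlot hσ hb₀ k rfl hv
  exact ⟨b, hb, (mem_Iplus_iff hσ hb).2 ⟨j, hj₀, by omega, hrun, hv⟩⟩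

open scoped Classical in
theorem sum_ncard_Iplus_eq_card_upSlot (hcols : HasBeadInEveryColumn σ) :
    ∑ b ∈ beadPos L σ, (Iplus L σ b).ncard = #{v | UpSlot σ v} := by
  have hcard : ∀ b, (Iplus L σ b).ncard = #{v | v ∈ Iplus L σ b} := fun b => by
    rw [← Set.ncard_coe_finset, coe_filter_univ]; rfl
  simp_rw [hcard]
  rw [← card_biUnion]
  · congr 1
    ext v
    simp only [mem_biUnion, mem_filter, mem_univ, true_and, mem_beadPos]
    exact ⟨fun ⟨b, hb, hv⟩ => upSlot_of_mem_Iplus hσ hb hv, exists_mem_Iplus_of_upSlot hσ hcols⟩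
  · intro b hb b' hb' hne
    simp only [Function.onFun, disjoint_left, mem_filter, mem_univ, true_and]
    exact fun v hv hv' => hne (eq_of_mem_Iplus hσ (mem_beadPos.1 hb) (mem_beadPos.1 hb') hv hv')

end Counting

section EmptyColumn

variable [Fact (1 < L)] {σ : Config L} {c : ZMod L}

variable (hσ : IsPM L σ)
include hσ

/-- A bead at `a` in column `c + 1` puts `a - (0, 1)` in direction `1`; in a bead-free column,
direction `1` propagates along `u` up to `a - (1, 0)`, whose edge covers `b_a` a second time. -/
lemma notMem_of_col_eq_add_one (hc : ∀ a, col a = c → (a, 0) ∉ σ) :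
    ∀ a, col a = c + 1 → (a, 0) ∉ σ := by
  have hone : ∀ p, col p = c → (p, 2) ∉ σ → (p, 1) ∈ σ := by
    intro p hp hp₂
    obtain ⟨d, hd⟩ := hσ.exists_mem_white p
    rcases Fin.eq_zero_or_eq_one_or_eq_two d with rfl | rfl | rfl
    exacts [absurd hd (hc p hp), hd, absurd hd hp₂]
  intro a ha hbead
  set q := a - (0, 1)
  have hq : col q = c := by rw [map_sub, ha, col_zero_one, add_sub_cancel_right]
  have hcolumn : ∀ k : ℕ, (q + k • u L, 1) ∈ σ := by
    intro k
    induction k with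
    | zero =>
      simpa using hone q hq fun h =>
        absurd (hσ.dir_eq_of_black_eq h hbead (by simp [q])) (by decide)
    | succ k ih =>
      refine hone _ (by rw [col_add_nsmul_u, hq]) fun h => ?_
      rw [add_succ_nsmul_u] at h
      exact absurd (hσ.dir_eq_of_black_eq ih h (by ext <;> simp [u])) (by decide)
  obtain ⟨k, -, hk⟩ := exists_eq_add_nsmul_u (x := q) (y := a - (1, 0))
    (by rw [hq, map_sub, ha, col_one_zero, add_sub_cancel_right])
  have h₁ : (a - (1, 0), 1) ∈ σ := hk ▸ hcolumn k
  exact absurd (hσ.dir_eq_of_black_eq h₁ hbead (by simp)) (by decide)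

lemma beadPos_eq_empty_of_not_hasBeadInEveryColumn (h : ¬HasBeadInEveryColumn σ) :
    beadPos L σ = ∅ := by
  obtain ⟨c, hc⟩ := not_forall.1 h
  have hshift : ∀ n : ℕ, ∀ a, col a = c + (n : ZMod L) → (a, 0) ∉ σ := by
    intro n
    induction n with
    | zero => simpa using fun a ha h => hc ⟨a, h, ha⟩
    | succ n ih =>
      push_cast
      rw [← add_assoc]
      exact notMem_of_col_eq_add_one hσ ih
  exact eq_empty_of_forall_notMem fun a ha => hshift (col a - c).val a (by simp) (mem_beadPos.1 ha)

end EmptyColumn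

section Reflection

/-- The point reflection `w_x ↦ b_{-x}`, `b_x ↦ w_{-x}` of the torus; it swaps the two colours,
maps columns to columns and reverses their direction. -/
def reflect (e : Edge L) : Edge L := (-e.1 - dvec L e.2, e.2)

lemma reflect_reflect (e : Edge L) : reflect (reflect e) = e := by
  simp [reflect]

lemma reflect_injective : Function.Injective (reflect (L := L)) :=
  Function.LeftInverse.injective reflect_reflect

def reflectCfg (σ : Config L) : Config L := σ.image reflect

variable {σ σ' s t : Config L} {x y : Pos L}

lemma mem_reflectCfg {e : Edge L} : e ∈ reflectCfg σ ↔ reflect e ∈ σ := by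
  refine ⟨fun h => ?_, fun h => mem_image.2 ⟨_, h, reflect_reflect e⟩⟩
  obtain ⟨e', he', rfl⟩ := mem_image.1 h
  rwa [reflect_reflect]

lemma reflectCfg_reflectCfg (σ : Config L) : reflectCfg (reflectCfg σ) = σ := by
  ext e; simp [mem_reflectCfg, reflect_reflect]

lemma reflectCfg_subset_reflectCfg : reflectCfg s ⊆ reflectCfg t ↔ s ⊆ t :=
  image_subset_image_iff reflect_injective

lemma reflectCfg_union : reflectCfg (s ∪ t) = reflectCfg s ∪ reflectCfg t := by
  ext; simp [mem_reflectCfg]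

lemma reflectCfg_sdiff : reflectCfg (s \ t) = reflectCfg s \ reflectCfg t := by
  ext; simp [mem_reflectCfg]

lemma reflectCfg_lowTriple (x : Pos L) : reflectCfg (lowTriple L x) = highTriple L (-x - u L) := by
  have h₁ : reflect (x, 0) = (-x - u L + u L, 0) := by simp [reflect]
  have h₂ : reflect (x + u L, 2) = (-x - u L - (0, 1), 2) := by simp [reflect]; abel
  have h₃ : reflect (x - (0, 1), 1) = (-x - u L, 1) := by
    simp only [reflect, dvec_one, Prod.mk.injEq, and_true]
    ext <;> simp [u]
    ring
  simp only [reflectCfg, lowTriple, highTriple, image_insert, image_singleton, h₁, h₂, h₃]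
  ext e; simp only [mem_insert, mem_singleton]; tauto

lemma reflectCfg_highTriple (x : Pos L) : reflectCfg (highTriple L x) = lowTriple L (-x - u L) := by
  rw [← reflectCfg_reflectCfg (lowTriple L _), reflectCfg_lowTriple, neg_sub, sub_neg_eq_add,
    add_sub_cancel_left]

lemma canDown_reflectCfg_iff : CanDown L (reflectCfg σ) (-x) ↔ CanUp L σ x := by
  rw [CanDown, CanUp, ← reflectCfg_lowTriple, reflectCfg_subset_reflectCfg]

lemma canUp_reflectCfg_iff : CanUp L (reflectCfg σ) (-x) ↔ CanDown L σ x := by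
  conv_rhs => rw [← reflectCfg_reflectCfg σ, ← neg_neg x]
  exact canDown_reflectCfg_iff.symm

lemma reflectCfg_upMove : reflectCfg (upMove L σ x) = downMove L (reflectCfg σ) (-x) := by
  rw [upMove, downMove, reflectCfg_union, reflectCfg_sdiff, reflectCfg_lowTriple,
    reflectCfg_highTriple]

lemma reflectCfg_downMove : reflectCfg (downMove L σ x) = upMove L (reflectCfg σ) (-x) := by
  conv_lhs => rw [← reflectCfg_reflectCfg σ, ← neg_neg x, ← reflectCfg_upMove]
  exact reflectCfg_reflectCfg _

lemma UpPath.reflectCfg (h : UpPath L σ x y σ') :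
    DownPath L (reflectCfg σ) (-x) (-y) (reflectCfg σ') := by
  induction h with
  | refl => exact .refl _ _
  | step hcan _ ih =>
    refine .step (canDown_reflectCfg_iff.2 hcan) ?_
    rwa [← reflectCfg_upMove, ← neg_add']

lemma DownPath.reflectCfg (h : DownPath L σ x y σ') :
    UpPath L (reflectCfg σ) (-x) (-y) (reflectCfg σ') := by
  induction h with
  | refl => exact .refl _ _
  | @step _ x _ _ hcan _ ih =>
    refine .step (canUp_reflectCfg_iff.2 hcan) ?_
    rwa [← reflectCfg_downMove, show -x + u L = -(x - u L) by abel]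

lemma Iplus_reflectCfg (σ : Config L) (x : Pos L) :
    Iplus L (reflectCfg σ) (-x) = -Iminus L σ x := by
  ext y
  simp only [Iplus, Iminus, Set.mem_neg, Set.mem_ofPred_eq]
  constructor
  · rintro ⟨hne, τ, hp⟩
    refine ⟨fun h => hne (by rw [← h, neg_neg]), reflectCfg τ, ?_⟩
    simpa [reflectCfg_reflectCfg] using hp.reflectCfg
  · rintro ⟨hne, τ, hp⟩
    exact ⟨fun h => hne (by rw [h, neg_neg]), reflectCfg τ, by simpa using hp.reflectCfg⟩

lemma neg_mem_beadPos_reflectCfg : -x ∈ beadPos L (reflectCfg σ) ↔ x ∈ beadPos L σ := by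
  simp [mem_beadPos, mem_reflectCfg, reflect]

lemma sum_ncard_Iminus_eq_sum_ncard_Iplus_reflectCfg (σ : Config L) :
    ∑ b ∈ beadPos L σ, (Iminus L σ b).ncard =
      ∑ b ∈ beadPos L (reflectCfg σ), (Iplus L (reflectCfg σ) b).ncard := by
  refine sum_nbij' (fun b => -b) (fun b => -b) (fun b hb => neg_mem_beadPos_reflectCfg.2 hb)
    (fun b hb => ?_) (by simp) (by simp) (fun b _ => by rw [Iplus_reflectCfg, Set.ncard_neg])
  rw [← neg_neg b] at hb
  exact neg_mem_beadPos_reflectCfg.1 hb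

lemma upSlot_reflectCfg_iff {v : Pos L} : UpSlot (reflectCfg σ) v ↔ DownSlot σ (-v) := by
  simp only [UpSlot, DownSlot, mem_reflectCfg, reflect, dvec_one, dvec_two, neg_sub,
    sub_sub_cancel_left, and_comm]

open scoped Classical in
lemma card_upSlot_reflectCfg [NeZero L] :
    #{v | UpSlot (reflectCfg σ) v} = #{v | DownSlot σ v} :=
  card_nbij' (fun v => -v) (fun v => -v) (fun v hv => by simpa [upSlot_reflectCfg_iff] using hv)
    (fun v hv => by simpa [upSlot_reflectCfg_iff] using hv) (fun v _ => neg_neg v)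
    (fun v _ => neg_neg v)

lemma IsPM.reflectCfg (hσ : IsPM L σ) : IsPM L (reflectCfg σ) := by
  refine ⟨fun x => ?_, fun y => ?_⟩
  · obtain ⟨e, ⟨he, hex⟩, huniq⟩ := hσ.2 (-x)
    refine ⟨e.2, ?_, fun d hd => ?_⟩
    · show (x, e.2) ∈ HexDimer.reflectCfg σ
      rw [mem_reflectCfg, reflect, ← hex]
      simpa using he
    · have := huniq (-x - dvec L d, d) ⟨by simpa [mem_reflectCfg, reflect] using hd, by simp⟩
      rw [← this]
  · obtain ⟨d, hd, huniq⟩ := hσ.1 (-y)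
    refine ⟨(y - dvec L d, d), ⟨by simpa [mem_reflectCfg, reflect] using hd, by simp⟩, ?_⟩
    rintro ⟨a, d'⟩ ⟨ha, rfl⟩
    obtain rfl := huniq d' (by rw [neg_add']; exact mem_reflectCfg.1 ha)
    simp

lemma HasBeadInEveryColumn.reflectCfg (hcols : HasBeadInEveryColumn σ) :
    HasBeadInEveryColumn (reflectCfg σ) := fun c => by
  obtain ⟨b, hb, hcol⟩ := hcols (-c)
  exact ⟨-b, by simpa [mem_reflectCfg, reflect] using hb, by rw [map_neg, hcol, neg_neg]⟩

end Reflection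

end

theorem sum_Iplus_eq_sum_Iminus (hL : 3 ≤ L)
    (σ : Config L) (hσ : IsPM L σ) :
    ∑ b ∈ beadPos L σ, (Iplus L σ b).ncard = ∑ b ∈ beadPos L σ, (Iminus L σ b).ncard := by
  have : Fact (1 < L) := ⟨by omega⟩
  classical
  by_cases hcols : HasBeadInEveryColumn σ
  · calc ∑ b ∈ beadPos L σ, (Iplus L σ b).ncard
        = #{v | UpSlot σ v} := sum_ncard_Iplus_eq_card_upSlot hσ hcols
      _ = #{v | DownSlot σ v} := card_upSlot_eq_card_downSlot hσ
      _ = #{v | UpSlot (reflectCfg σ) v} := card_upSlot_reflectCfg.symm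
      _ = ∑ b ∈ beadPos L (reflectCfg σ), (Iplus L (reflectCfg σ) b).ncard :=
        (sum_ncard_Iplus_eq_card_upSlot hσ.reflectCfg hcols.reflectCfg).symm
      _ = ∑ b ∈ beadPos L σ, (Iminus L σ b).ncard :=
        (sum_ncard_Iminus_eq_sum_ncard_Iplus_reflectCfg σ).symm
  · simp [beadPos_eq_empty_of_not_hasBeadInEveryColumn hσ hcols]

end HexDimer
end

section
/- Let k₁, k₂, k₃ > 0, P̃(θ,φ) = k₃ + k₁e^{iθ} + k₂e^{iφ}, and assume C := (2π)^{−2}·∫₀^{2π}∫₀^{2π} |P̃(θ,φ)|^{−1} dθ dφ < ∞. For x, x' ∈ ℤ² let K⁻¹(x,x') = (2π)^{−2}·∫₀^{2π}∫₀^{2π} e^{−iθ(x'₂−x₂)+iφ(x'₁−x₁)} / P̃(θ,φ) dθ dφ. Then for every r ≥ 1 and all points x^{(1)}, …, x^{(r)}, x'^{(1)}, …, x'^{(r)} ∈ ℤ²: |det( (K⁻¹(x^{(i)}, x'^{(j)}))_{1≤i,j≤r} )| ≤ Cʳ. -/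
/-!
With `χ_x(θ, φ) = e^{-iθx₂+iφx₁}`, every entry is an inner product in `L²` of the torus:
`(2π)² K⁻¹(x, x') = ⟪χ_x |P̃|^{-1/2}, χ_{x'} P̃⁻¹ |P̃|^{1/2}⟫`, and both factors have squared norm
`∫ |P̃|⁻¹ = (2π)² C`. The bound is then the generalised Hadamard inequality
`|det ⟪u_i, v_j⟫| ≤ ∏ ‖u_i‖ ∏ ‖v_j‖`. For it, expand the `u_i` in an orthonormal basis `e` of their
span: the matrix becomes `Aᴴ B` with `A = (⟪e_k, u_i⟫)` and `B = (⟪e_k, v_j⟫)`, and Hadamard's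
inequality `|det A| ≤ ∏ ‖columns of A‖` (from the QR decomposition) combined with Bessel's
inequality bounds each factor.
-/

open MeasureTheory intervalIntegral Real Complex

namespace Kasteleyn

/-- The Kasteleyn polynomial on the torus: `P̃(θ,φ) = k₃ + k₁ e^{iθ} + k₂ e^{iφ}`. -/
noncomputable def Pt (k1 k2 k3 : ℝ) (θ φ : ℝ) : ℂ :=
  (k3 : ℂ) + (k1 : ℂ) * Complex.exp (Complex.I * θ) + (k2 : ℂ) * Complex.exp (Complex.I * φ)

/-- `C = (2π)^{−2} ∫₀^{2π}∫₀^{2π} |P̃(θ,φ)|^{−1} dθ dφ`. -/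
noncomputable def Cconst (k1 k2 k3 : ℝ) : ℝ :=
  ((2 * π) ^ 2)⁻¹ * ∫ θ in (0 : ℝ)..(2 * π), ∫ φ in (0 : ℝ)..(2 * π),
    ‖Pt k1 k2 k3 θ φ‖⁻¹

/-- The inverse Kasteleyn kernel
`K⁻¹(x,x') = (2π)^{−2} ∫₀^{2π}∫₀^{2π} e^{−iθ(x'₂−x₂)+iφ(x'₁−x₁)} / P̃(θ,φ) dθ dφ`. -/
noncomputable def Kinv (k1 k2 k3 : ℝ) (x x' : ℤ × ℤ) : ℂ :=
  (((2 * π) ^ 2)⁻¹ : ℝ) * ∫ θ in (0 : ℝ)..(2 * π), ∫ φ in (0 : ℝ)..(2 * π),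
    Complex.exp (-Complex.I * θ * ((x'.2 - x.2 : ℤ) : ℂ) +
        Complex.I * φ * ((x'.1 - x.1 : ℤ) : ℂ)) / Pt k1 k2 k3 θ φ

/-- `A_x(y) = (2π)^{−2} ∫∫ e^{−iθ(x₂−y₂)+iφ(x₁−y₁)} |P̃(θ,φ)|^{−1/2} dθ dφ`. -/
noncomputable def Afn (k1 k2 k3 : ℝ) (x y : ℤ × ℤ) : ℂ :=
  (((2 * π) ^ 2)⁻¹ : ℝ) * ∫ θ in (0 : ℝ)..(2 * π), ∫ φ in (0 : ℝ)..(2 * π),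
    Complex.exp (-Complex.I * θ * ((x.2 - y.2 : ℤ) : ℂ) +
        Complex.I * φ * ((x.1 - y.1 : ℤ) : ℂ)) *
      ((‖Pt k1 k2 k3 θ φ‖ ^ (-(1 / 2 : ℝ)) : ℝ) : ℂ)

/-- `B_{x'}(y) = (2π)^{−2} ∫∫ e^{−iθ(x'₂−y₂)+iφ(x'₁−y₁)} conj(P̃(θ,φ)) |P̃(θ,φ)|^{−3/2} dθ dφ`. -/
noncomputable def Bfn (k1 k2 k3 : ℝ) (x' y : ℤ × ℤ) : ℂ :=
  (((2 * π) ^ 2)⁻¹ : ℝ) * ∫ θ in (0 : ℝ)..(2 * π), ∫ φ in (0 : ℝ)..(2 * π),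
    Complex.exp (-Complex.I * θ * ((x'.2 - y.2 : ℤ) : ℂ) +
        Complex.I * φ * ((x'.1 - y.1 : ℤ) : ℂ)) *
      (starRingEnd ℂ) (Pt k1 k2 k3 θ φ) *
      ((‖Pt k1 k2 k3 θ φ‖ ^ (-(3 / 2 : ℝ)) : ℝ) : ℂ)

end Kasteleyn

open scoped InnerProductSpace ComplexConjugate
open Module Matrix

section Hadamard

variable {𝕜 E ι : Type*} [RCLike 𝕜] [NormedAddCommGroup E] [InnerProductSpace 𝕜 E]
  [Fintype ι]

theorem OrthonormalBasis.norm_det_le_prod_norm [DecidableEq ι] [FiniteDimensional 𝕜 E]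
    (a : OrthonormalBasis ι 𝕜 E) (f : ι → E) :
    ‖a.toBasis.det f‖ ≤ ∏ i, ‖f i‖ := by
  -- Gram–Schmidt needs a linear order on `ι`; any one will do.
  let : LinearOrder ι := LinearOrder.lift' (Fintype.equivFin ι) (Fintype.equivFin ι).injective
  let : LocallyFiniteOrderBot ι := LocallyFiniteOrderBot.ofIic ι (fun a => {x | x ≤ a}) (by simp)
  set b := InnerProductSpace.gramSchmidtOrthonormalBasis (finrank_eq_card_basis a.toBasis) f
  have hdet : a.toBasis.det f = a.toBasis.det b * b.toBasis.det f := by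
    conv_lhs => rw [a.toBasis.det.eq_smul_basis_det b.toBasis]
    rfl
  rw [hdet, norm_mul, a.det_to_matrix_orthonormalBasis b, one_mul,
    InnerProductSpace.gramSchmidtOrthonormalBasis_det, norm_prod]
  gcongr with i
  simpa using norm_inner_le_norm (𝕜 := 𝕜) (b i) (f i)

theorem Matrix.norm_det_le_prod_norm_col [DecidableEq ι] (A : Matrix ι ι 𝕜) :
    ‖A.det‖ ≤ ∏ j, ‖(WithLp.toLp 2 (Aᵀ j) : EuclideanSpace 𝕜 ι)‖ := by
  have h := (EuclideanSpace.basisFun ι 𝕜).norm_det_le_prod_norm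
    fun j => (WithLp.toLp 2 (Aᵀ j) : EuclideanSpace 𝕜 ι)
  rw [Basis.det_apply] at h
  convert h using 3
  ext i j
  simp [Basis.toMatrix_apply]

theorem Orthonormal.inner_eq_sum_inner_mul_inner {e : ι → E} (he : Orthonormal 𝕜 e) {x : E}
    (hx : x ∈ Submodule.span 𝕜 (Set.range e)) (y : E) :
    ⟪x, y⟫_𝕜 = ∑ k, ⟪x, e k⟫_𝕜 * ⟪e k, y⟫_𝕜 := by
  obtain ⟨c, rfl⟩ := (Submodule.mem_span_range_iff_exists_fun 𝕜).mp hx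
  simp [sum_inner, inner_smul_left, he.inner_left_fintype]

theorem Orthonormal.norm_det_inner_le [DecidableEq ι] {e : ι → E} (he : Orthonormal 𝕜 e)
    (w : ι → E) : ‖(Matrix.of fun k j => ⟪e k, w j⟫_𝕜).det‖ ≤ ∏ j, ‖w j‖ := by
  refine (norm_det_le_prod_norm_col _).trans
    (Finset.prod_le_prod (fun _ _ => norm_nonneg _) fun j _ => ?_)
  rw [← sq_le_sq₀ (norm_nonneg _) (norm_nonneg _), EuclideanSpace.norm_sq_eq]
  exact he.sum_inner_products_le (w j)

theorem Matrix.det_of_inner_eq_zero_of_not_linearIndependent [DecidableEq ι] {u : ι → E}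
    (hu : ¬LinearIndependent 𝕜 u) (v : ι → E) : (Matrix.of fun i j => ⟪u i, v j⟫_𝕜).det = 0 := by
  obtain ⟨g, hsum, i, hgi⟩ := Fintype.not_linearIndependent_iff.mp hu
  refine exists_vecMul_eq_zero_iff.mp ⟨star g, fun h => hgi (by simpa using congrFun h i), ?_⟩
  ext j
  simpa [vecMul, dotProduct, sum_inner, inner_smul_left] using congrArg (⟪·, v j⟫_𝕜) hsum

theorem LinearIndependent.exists_orthonormal_span_eq {u : ι → E} (hu : LinearIndependent 𝕜 u) :
    ∃ e : ι → E, Orthonormal 𝕜 e ∧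
      Submodule.span 𝕜 (Set.range e) = Submodule.span 𝕜 (Set.range u) := by
  let : LinearOrder ι := LinearOrder.lift' (Fintype.equivFin ι) (Fintype.equivFin ι).injective
  let : LocallyFiniteOrderBot ι := LocallyFiniteOrderBot.ofIic ι (fun a => {x | x ≤ a}) (by simp)
  exact ⟨_, InnerProductSpace.gramSchmidtNormed_orthonormal hu,
    (InnerProductSpace.span_gramSchmidtNormed_range u).trans
      (InnerProductSpace.span_gramSchmidt 𝕜 u)⟩

theorem norm_det_inner_le_prod_norm_mul_prod_norm [DecidableEq ι] (u v : ι → E) :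
    ‖(Matrix.of fun i j => ⟪u i, v j⟫_𝕜).det‖ ≤ (∏ i, ‖u i‖) * ∏ j, ‖v j‖ := by
  by_cases hu : LinearIndependent 𝕜 u
  swap
  · rw [det_of_inner_eq_zero_of_not_linearIndependent hu, norm_zero]
    positivity
  obtain ⟨e, he, hspan⟩ := hu.exists_orthonormal_span_eq
  have hfactor : (Matrix.of fun i j => ⟪u i, v j⟫_𝕜) =
      (Matrix.of fun k i => ⟪e k, u i⟫_𝕜)ᴴ * Matrix.of fun k j => ⟪e k, v j⟫_𝕜 := by
    ext i j
    rw [of_apply, he.inner_eq_sum_inner_mul_inner (hspan ▸ Submodule.subset_span ⟨i, rfl⟩)]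
    simp [mul_apply]
  rw [hfactor, det_mul, det_conjTranspose, norm_mul, norm_star]
  exact mul_le_mul (he.norm_det_inner_le u) (he.norm_det_inner_le v) (norm_nonneg _)
    (by positivity)

end Hadamard

section L2

variable {𝕜 α ι : Type*} [RCLike 𝕜] [MeasurableSpace α] {μ : Measure α} [Fintype ι]

theorem MeasureTheory.MemLp.inner_toLp_toLp {f g : α → 𝕜} (hf : MemLp f 2 μ)
    (hg : MemLp g 2 μ) : ⟪hf.toLp f, hg.toLp g⟫_𝕜 = ∫ x, conj (f x) * g x ∂μ := by
  rw [L2.inner_def]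
  refine integral_congr_ae ?_
  filter_upwards [hf.coeFn_toLp, hg.coeFn_toLp] with x hfx hgx
  rw [hfx, hgx, RCLike.inner_apply, mul_comm]

theorem MeasureTheory.MemLp.norm_toLp_eq_sqrt {f : α → 𝕜} (hf : MemLp f 2 μ) :
    ‖hf.toLp f‖ = √(∫ x, ‖f x‖ ^ 2 ∂μ) := by
  rw [← Real.sqrt_sq (norm_nonneg _), ← inner_self_eq_norm_sq (𝕜 := 𝕜), hf.inner_toLp_toLp hf]
  simp_rw [RCLike.conj_mul, ← RCLike.ofReal_pow]
  rw [_root_.integral_ofReal, RCLike.ofReal_re]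

theorem norm_det_integral_conj_mul_le [DecidableEq ι] {u v : ι → α → 𝕜}
    (hu : ∀ i, MemLp (u i) 2 μ) (hv : ∀ j, MemLp (v j) 2 μ) :
    ‖(of fun i j => ∫ x, conj (u i x) * v j x ∂μ).det‖ ≤
      (∏ i, √(∫ x, ‖u i x‖ ^ 2 ∂μ)) * ∏ j, √(∫ x, ‖v j x‖ ^ 2 ∂μ) := by
  simpa only [MemLp.inner_toLp_toLp, MemLp.norm_toLp_eq_sqrt] using
    norm_det_inner_le_prod_norm_mul_prod_norm (𝕜 := 𝕜) (fun i => (hu i).toLp) fun j => (hv j).toLp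

theorem norm_det_integral_conj_mul_mul_le [DecidableEq ι] {χ ψ : ι → α → 𝕜}
    (hχ : ∀ i, AEStronglyMeasurable (χ i) μ) (hψ : ∀ j, AEStronglyMeasurable (ψ j) μ)
    (hχ_norm : ∀ i x, ‖χ i x‖ = 1) (hψ_norm : ∀ j x, ‖ψ j x‖ = 1) {w : α → 𝕜}
    (hw : Integrable w μ) :
    ‖(of fun i j => ∫ x, conj (χ i x) * ψ j x * w x ∂μ).det‖ ≤
      (∫ x, ‖w x‖ ∂μ) ^ Fintype.card ι := by
  -- `w = conj s * (w / s)`, where both factors have squared modulus `‖w‖`.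
  set s : α → 𝕜 := fun x => ((√‖w x‖ : ℝ) : 𝕜)
  have hs : AEStronglyMeasurable s μ :=
    RCLike.continuous_ofReal.comp_aestronglyMeasurable
      (Real.continuous_sqrt.comp_aestronglyMeasurable hw.norm.aestronglyMeasurable)
  have hs_sq : ∀ x, ‖s x‖ ^ 2 = ‖w x‖ := fun x => by
    simp [s, Real.sq_sqrt (norm_nonneg (w x))]
  have hw_div_s_sq : ∀ x, ‖w x / s x‖ ^ 2 = ‖w x‖ := fun x => by
    rcases eq_or_ne (w x) 0 with h | h
    · simp [h]
    · rw [norm_div, div_pow, hs_sq, sq, mul_self_div_self]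
  have hmemLp : ∀ {f : α → 𝕜}, AEStronglyMeasurable f μ → (∀ x, ‖f x‖ ^ 2 = ‖w x‖) →
      MemLp f 2 μ := fun hf hf_sq =>
    (memLp_two_iff_integrable_sq_norm hf).mpr (by simpa only [hf_sq] using hw.norm)
  have hu : ∀ i, MemLp (fun x => χ i x * s x) 2 μ := fun i =>
    hmemLp ((hχ i).mul hs) fun x => by rw [norm_mul, mul_pow, hχ_norm, one_pow, one_mul, hs_sq]
  have hv : ∀ j, MemLp (fun x => ψ j x * (w x / s x)) 2 μ := fun j =>
    hmemLp ((hψ j).mul (hw.aemeasurable.div hs.aemeasurable).aestronglyMeasurable) fun x => by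
      rw [norm_mul, mul_pow, hψ_norm, one_pow, one_mul, hw_div_s_sq]
  have hentry : ∀ i j x,
      conj (χ i x * s x) * (ψ j x * (w x / s x)) = conj (χ i x) * ψ j x * w x := by
    intro i j x
    rcases eq_or_ne (w x) 0 with h | h
    · simp [h]
    · have hs0 : ((√‖w x‖ : ℝ) : 𝕜) ≠ 0 := by simpa using h
      simp only [s, map_mul, RCLike.conj_ofReal]
      field_simp
  have := norm_det_integral_conj_mul_le hu hv
  simp only [hentry, norm_mul, hχ_norm, hψ_norm, one_mul, hs_sq, hw_div_s_sq, Finset.prod_const,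
    Finset.card_univ] at this
  rwa [← mul_pow, Real.mul_self_sqrt (integral_nonneg fun _ => norm_nonneg _)] at this

end L2

theorem intervalIntegral_intervalIntegral_eq_setIntegral_prod {E : Type*} [NormedAddCommGroup E]
    [NormedSpace ℝ E] {a b c d : ℝ} (hab : a ≤ b) (hcd : c ≤ d) {F : ℝ × ℝ → E}
    (hF : IntegrableOn F (Set.Icc a b ×ˢ Set.Icc c d)) :
    ∫ x in a..b, ∫ y in c..d, F (x, y) = ∫ p in Set.Icc a b ×ˢ Set.Icc c d, F p := by
  rw [Measure.volume_eq_prod] at hF ⊢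
  simp only [intervalIntegral.integral_of_le hab, intervalIntegral.integral_of_le hcd,
    ← integral_Icc_eq_integral_Ioc]
  exact (setIntegral_prod F hF).symm

namespace Kasteleyn

noncomputable def torusChar (x : ℤ × ℤ) (p : ℝ × ℝ) : ℂ :=
  Complex.exp (-Complex.I * p.1 * x.2 + Complex.I * p.2 * x.1)

theorem norm_torusChar (x : ℤ × ℤ) (p : ℝ × ℝ) : ‖torusChar x p‖ = 1 := by
  simp [torusChar, Complex.norm_exp]

theorem continuous_torusChar (x : ℤ × ℤ) : Continuous (torusChar x) := by
  unfold torusChar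
  fun_prop

theorem conj_torusChar_mul_torusChar (x x' : ℤ × ℤ) (p : ℝ × ℝ) :
    conj (torusChar x p) * torusChar x' p =
      Complex.exp (-Complex.I * p.1 * ((x'.2 - x.2 : ℤ) : ℂ) +
        Complex.I * p.2 * ((x'.1 - x.1 : ℤ) : ℂ)) := by
  rw [torusChar, torusChar, ← Complex.exp_conj, ← Complex.exp_add]
  congr 1
  simp
  ring

variable {k1 k2 k3 : ℝ}

theorem continuous_Pt : Continuous fun p : ℝ × ℝ => Pt k1 k2 k3 p.1 p.2 := by
  unfold Pt
  fun_prop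

theorem Kinv_eq_setIntegral
    (hC : IntegrableOn (fun p : ℝ × ℝ => ‖Pt k1 k2 k3 p.1 p.2‖⁻¹)
      (Set.Icc 0 (2 * π) ×ˢ Set.Icc 0 (2 * π))) (x x' : ℤ × ℤ) :
    Kinv k1 k2 k3 x x' = (((2 * π) ^ 2)⁻¹ : ℝ) * ∫ p in Set.Icc 0 (2 * π) ×ˢ Set.Icc 0 (2 * π),
      conj (torusChar x p) * torusChar x' p * (Pt k1 k2 k3 p.1 p.2)⁻¹ := by
  have hintegrable : IntegrableOn
      (fun p => conj (torusChar x p) * torusChar x' p * (Pt k1 k2 k3 p.1 p.2)⁻¹)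
      (Set.Icc 0 (2 * π) ×ˢ Set.Icc 0 (2 * π)) :=
    hC.mono' (((Complex.continuous_conj.comp (continuous_torusChar x)).mul
      (continuous_torusChar x')).aestronglyMeasurable.mul
        continuous_Pt.measurable.inv.aestronglyMeasurable)
      (Filter.Eventually.of_forall fun p => by simp [norm_torusChar])
  rw [Kinv, ← intervalIntegral_intervalIntegral_eq_setIntegral_prod (by positivity) (by positivity)
    hintegrable]
  simp_rw [conj_torusChar_mul_torusChar, div_eq_mul_inv]

theorem Cconst_eq_setIntegral
    (hC : IntegrableOn (fun p : ℝ × ℝ => ‖Pt k1 k2 k3 p.1 p.2‖⁻¹)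
      (Set.Icc 0 (2 * π) ×ˢ Set.Icc 0 (2 * π))) :
    Cconst k1 k2 k3 = ((2 * π) ^ 2)⁻¹ * ∫ p in Set.Icc 0 (2 * π) ×ˢ Set.Icc 0 (2 * π),
      ‖(Pt k1 k2 k3 p.1 p.2)⁻¹‖ := by
  simp_rw [Cconst, norm_inv]
  rw [intervalIntegral_intervalIntegral_eq_setIntegral_prod (by positivity) (by positivity) hC]

theorem kasteleyn_det_bound_general (k1 k2 k3 : ℝ)
    (hC : IntegrableOn (fun p : ℝ × ℝ => ‖Pt k1 k2 k3 p.1 p.2‖⁻¹)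
      (Set.Icc 0 (2 * π) ×ˢ Set.Icc 0 (2 * π))) :
    ∀ r : ℕ, 1 ≤ r → ∀ X X' : Fin r → ℤ × ℤ,
      ‖Matrix.det (Matrix.of fun i j => Kinv k1 k2 k3 (X i) (X' j))‖ ≤
        Cconst k1 k2 k3 ^ r := by
  intro r _ X X'
  have hw : IntegrableOn (fun p : ℝ × ℝ => (Pt k1 k2 k3 p.1 p.2)⁻¹)
      (Set.Icc 0 (2 * π) ×ˢ Set.Icc 0 (2 * π)) :=
    hC.mono' (continuous_Pt.measurable.inv.aestronglyMeasurable)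
      (Filter.Eventually.of_forall fun p => (norm_inv _).le)
  have hdet := norm_det_integral_conj_mul_mul_le
    (fun i => (continuous_torusChar (X i)).aestronglyMeasurable)
    (fun j => (continuous_torusChar (X' j)).aestronglyMeasurable)
    (fun i => norm_torusChar (X i)) (fun j => norm_torusChar (X' j)) hw
  have hK : (of fun i j => Kinv k1 k2 k3 (X i) (X' j)) = ((((2 * π) ^ 2)⁻¹ : ℝ) : ℂ) •
      of fun i j => ∫ p in Set.Icc 0 (2 * π) ×ˢ Set.Icc 0 (2 * π),
        conj (torusChar (X i) p) * torusChar (X' j) p * (Pt k1 k2 k3 p.1 p.2)⁻¹ := by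
    ext i j
    rw [of_apply, Kinv_eq_setIntegral hC]
    rfl
  rw [hK, det_smul, norm_mul, norm_pow, Complex.norm_real, Real.norm_of_nonneg (by positivity),
    Fintype.card_fin, Cconst_eq_setIntegral hC, mul_pow ((2 * π) ^ 2)⁻¹]
  rw [Fintype.card_fin] at hdet
  exact mul_le_mul_of_nonneg_left hdet (by positivity)

/-- Let `k₁,k₂,k₃ > 0` with
`C = (2π)^{−2}∫∫ |P̃|^{−1} < ∞` (i.e. `|P̃|⁻¹` is integrable on `[0,2π]²`).  Then for
every `r ≥ 1` and all points `x⁽¹⁾, …, x⁽ʳ⁾, x'⁽¹⁾, …, x'⁽ʳ⁾ ∈ ℤ²`,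
`|det((K⁻¹(x⁽ⁱ⁾, x'⁽ʲ⁾))_{1≤i,j≤r})| ≤ Cʳ`. -/
theorem kasteleyn_det_bound (k1 k2 k3 : ℝ)
    (h1 : 0 < k1) (h2 : 0 < k2) (h3 : 0 < k3)
    (hC : IntegrableOn (fun p : ℝ × ℝ => ‖Pt k1 k2 k3 p.1 p.2‖⁻¹)
      (Set.Icc 0 (2 * π) ×ˢ Set.Icc 0 (2 * π))) :
    ∀ r : ℕ, 1 ≤ r → ∀ X X' : Fin r → ℤ × ℤ,
      ‖Matrix.det (Matrix.of fun i j => Kinv k1 k2 k3 (X i) (X' j))‖ ≤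
        Cconst k1 k2 k3 ^ r :=
  kasteleyn_det_bound_general k1 k2 k3 hC

end Kasteleyn
end

section
/- Let S ⊆ ℤ × (0,∞) be a set of space–time points. Then: (i) for every a ∈ ℤ, every m ∈ ℕ, every 0 ≤ s < t and every k ≥ 0, Γ((a−m, s), t, k) ≤ Γ((a, s), t, k) + m (as elements of ℕ ∪ {∞}); and (ii) consequently, if z, z' : ℤ → ℤ satisfy z(j) ≤ z'(j) for every j ∈ ℤ, then for every n ∈ ℤ and t > 0, inf_{j ≤ n} ( z(j) + Γ((z(j), 0), t, n−j) ) ≤ inf_{j ≤ n} ( z'(j) + Γ((z'(j), 0), t, n−j) ) (infima in ℤ ∪ {±∞}). -/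
open scoped ENNReal

namespace Hammersley

/-- There is an up-right path of `n` points of `S` in the rectangle `(a,b] × (s,t]`:
points `(x₁,t₁), …, (x_n,t_n) ∈ S` with `a < x₁ < ⋯ < x_n ≤ b` and
`s < t₁ < ⋯ < t_n ≤ t`. -/
def ChainExists (S : Set (ℤ × ℝ)) (a : ℤ) (s : ℝ) (b : ℤ) (t : ℝ) (n : ℕ) : Prop :=
  ∃ (x : Fin n → ℤ) (w : Fin n → ℝ), StrictMono x ∧ StrictMono w ∧
    (∀ i, (x i, w i) ∈ S) ∧ (∀ i, a < x i ∧ x i ≤ b) ∧ (∀ i, s < w i ∧ w i ≤ t)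

/-- `L((a,s),(b,t))`: the maximal number of points of `S` on an up-right path in the
rectangle `(a,b] × (s,t]`. -/
noncomputable def Lpp (S : Set (ℤ × ℝ)) (a : ℤ) (s : ℝ) (b : ℤ) (t : ℝ) : ℕ :=
  sSup {n : ℕ | ChainExists S a s b t n}

/-- `Γ((a,s),t,k) = inf{h ≥ 0 : L((a,s),(a+h,t)) ≥ k}` (an element of `[0,∞]`,
equal to `∞` when no such `h` exists). -/
noncomputable def Gam (S : Set (ℤ × ℝ)) (a : ℤ) (s t : ℝ) (k : ℕ) : ℝ≥0∞ :=
  sInf {c : ℝ≥0∞ | ∃ h : ℕ, c = h ∧ k ≤ Lpp S a s (a + h) t}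

lemma chainExists_zero (S : Set (ℤ × ℝ)) (a : ℤ) (s : ℝ) (b : ℤ) (t : ℝ) :
    ChainExists S a s b t 0 :=
  ⟨Fin.elim0, Fin.elim0, fun i => i.elim0, fun i => i.elim0, fun i => i.elim0,
    fun i => i.elim0, fun i => i.elim0⟩

lemma ChainExists.mono_left {S : Set (ℤ × ℝ)} {a a' : ℤ} {s : ℝ} {b : ℤ} {t : ℝ} {n : ℕ}
    (h : a' ≤ a) (hc : ChainExists S a s b t n) : ChainExists S a' s b t n := by
  obtain ⟨x, w, hx, hw, hmem, hab, hst⟩ := hc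
  exact ⟨x, w, hx, hw, hmem, fun i => ⟨h.trans_lt (hab i).1, (hab i).2⟩, hst⟩

/-- The abscissae of a chain are distinct points of `(a, b]`. -/
lemma ChainExists.le_toNat_sub {S : Set (ℤ × ℝ)} {a : ℤ} {s : ℝ} {b : ℤ} {t : ℝ} {n : ℕ}
    (h : ChainExists S a s b t n) : n ≤ (b - a).toNat := by
  obtain ⟨x, -, hx, -, -, hab, -⟩ := h
  calc n = (Finset.univ : Finset (Fin n)).card := by simp
    _ ≤ (Finset.Ioc a b).card :=
        Finset.card_le_card_of_injOn x (fun i _ => Finset.mem_Ioc.mpr (hab i))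
          hx.injective.injOn
    _ = (b - a).toNat := Int.card_Ioc a b

lemma bddAbove_setOf_chainExists (S : Set (ℤ × ℝ)) (a : ℤ) (s : ℝ) (b : ℤ) (t : ℝ) :
    BddAbove {n | ChainExists S a s b t n} :=
  ⟨(b - a).toNat, fun _ hn => hn.le_toNat_sub⟩

lemma chainExists_lpp (S : Set (ℤ × ℝ)) (a : ℤ) (s : ℝ) (b : ℤ) (t : ℝ) :
    ChainExists S a s b t (Lpp S a s b t) :=
  Nat.sSup_mem ⟨0, chainExists_zero S a s b t⟩ (bddAbove_setOf_chainExists S a s b t)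

lemma lpp_antitone_left (S : Set (ℤ × ℝ)) (s : ℝ) (b : ℤ) (t : ℝ) :
    Antitone fun a => Lpp S a s b t := fun _ _ h =>
  le_csSup (bddAbove_setOf_chainExists S _ s b t) ((chainExists_lpp S _ s b t).mono_left h)

/-- A window `(a, a + h]` containing a `k`-chain sits inside `(a', a + h]`, whose width from `a'`
is `h + (a - a')`. -/
lemma gam_le_gam_add_of_le (S : Set (ℤ × ℝ)) {a' a : ℤ} (h : a' ≤ a) (s t : ℝ) (k : ℕ) :
    Gam S a' s t k ≤ Gam S a s t k + ((a - a').toNat : ℝ≥0∞) := by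
  rw [Gam, Gam, ENNReal.sInf_add]
  refine le_iInf₂ fun c ⟨w, hc, hk⟩ =>
    sInf_le ⟨w + (a - a').toNat, by rw [hc]; push_cast; rfl, ?_⟩
  have hend : a' + ((w + (a - a').toNat : ℕ) : ℤ) = a + w := by push_cast; omega
  rw [hend]
  exact hk.trans (lpp_antitone_left S s (a + w) t h)

lemma coe_add_toEReal_le_of_le_add {g g' : ℝ≥0∞} {m : ℕ} (h : g ≤ g' + m) (x : ℝ) :
    (x : EReal) + g ≤ ((x + m : ℝ) : EReal) + g' := by
  calc (x : EReal) + g ≤ (x : EReal) + (g' + m : ℝ≥0∞) := by gcongr; exact_mod_cast h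
    _ = ((x + m : ℝ) : EReal) + g' := by
      rw [EReal.coe_ennreal_add, EReal.coe_add, add_comm (g' : EReal), ← add_assoc]
      norm_cast

theorem hammersley_monotonicity_general (S : Set (ℤ × ℝ)) :
    (∀ (a : ℤ) (m : ℕ) (s t : ℝ), 0 ≤ s → s < t → ∀ k : ℕ,
      Gam S (a - (m : ℤ)) s t k ≤ Gam S a s t k + (m : ℝ≥0∞)) ∧
    (∀ z z' : ℤ → ℤ, (∀ j : ℤ, z j ≤ z' j) → ∀ (n : ℤ) (t : ℝ), 0 < t →
      (⨅ j : {j : ℤ // j ≤ n}, (((z j.1 : ℝ) : EReal) +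
          ENNReal.toEReal (Gam S (z j.1) 0 t (n - j.1).toNat))) ≤
      (⨅ j : {j : ℤ // j ≤ n}, (((z' j.1 : ℝ) : EReal) +
          ENNReal.toEReal (Gam S (z' j.1) 0 t (n - j.1).toNat)))) := by
  refine ⟨fun a m s t _ _ k => ?_, fun z z' hzz n t _ => iInf_mono fun j => ?_⟩
  · simpa using gam_le_gam_add_of_le S (Int.sub_le_self a m.cast_nonneg) s t k
  · have hz' : ((z j.1 : ℝ) + ((z' j.1 - z j.1).toNat : ℕ) : ℝ) = z' j.1 := by
      have := hzz j.1
      rw [← Int.cast_natCast, Int.toNat_of_nonneg (by omega)]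
      push_cast
      ring
    simpa only [hz'] using coe_add_toEReal_le_of_le_add
      (gam_le_gam_add_of_le S (hzz j.1) 0 t (n - j.1).toNat) (z j.1)

/-- Let `S ⊆ ℤ × (0,∞)` be a set of space–time points.
(i) For every `a ∈ ℤ`, `m ∈ ℕ`, `0 ≤ s < t` and `k ≥ 0`:
`Γ((a−m,s),t,k) ≤ Γ((a,s),t,k) + m`.
(ii) Consequently, if `z, z' : ℤ → ℤ` satisfy `z(j) ≤ z'(j)` for all `j`, then for every
`n ∈ ℤ` and `t > 0`,
`inf_{j ≤ n} (z(j) + Γ((z(j),0),t,n−j)) ≤ inf_{j ≤ n} (z'(j) + Γ((z'(j),0),t,n−j))`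
(infima taken in `ℝ ∪ {±∞}`), expressing monotonicity of the discrete Hammersley
dynamics in the initial condition. -/
theorem hammersley_monotonicity (S : Set (ℤ × ℝ)) (hS : ∀ p ∈ S, 0 < p.2) :
    (∀ (a : ℤ) (m : ℕ) (s t : ℝ), 0 ≤ s → s < t → ∀ k : ℕ,
      Gam S (a - (m : ℤ)) s t k ≤ Gam S a s t k + (m : ℝ≥0∞)) ∧
    (∀ z z' : ℤ → ℤ, (∀ j : ℤ, z j ≤ z' j) → ∀ (n : ℤ) (t : ℝ), 0 < t →
      (⨅ j : {j : ℤ // j ≤ n}, (((z j.1 : ℝ) : EReal) +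
          ENNReal.toEReal (Gam S (z j.1) 0 t (n - j.1).toNat))) ≤
      (⨅ j : {j : ℤ // j ≤ n}, (((z' j.1 : ℝ) : EReal) +
          ENNReal.toEReal (Gam S (z' j.1) 0 t (n - j.1).toNat)))) :=
  hammersley_monotonicity_general S

end Hammersley
end

section
/- For every T > 0 and every ε ∈ (0,1] there exist constants c, c' > 0 such that for every real D ≥ 2: Σ_{r ∈ ℕ, r ≥ εD} Tʳ·(r/ε)ʳ / (r!)² ≤ c·exp( −c'·D·log D ). -/
/-! Since `r! ≥ (r/e)^r`, the `r`-th term is at most `(e²T/(εr))^r`, hence at most `(a/D)^r` with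
`a = e²T/ε²` once `r ≥ εD`. For `D ≥ max(2a, a²)` the tail is thus dominated by a geometric series
of ratio at most `1/2`, giving `2 (a/D)^⌈εD⌉ ≤ 2 D^(-εD/2)`; on the remaining bounded range of `D`
the whole convergent series is a constant bound. -/

open Real
open scoped Nat

lemma div_exp_one_pow_le_factorial (n : ℕ) : ((n : ℝ) / exp 1) ^ n ≤ n ! := by
  have h := pow_div_factorial_le_exp (x := n) (Nat.cast_nonneg n) n
  rw [div_le_iff₀ (by positivity), ← exp_one_pow] at h
  rw [div_pow, div_le_iff₀ (by positivity)]
  linarith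

lemma hasSum_ite_geometric {q : ℝ} (hq0 : 0 ≤ q) (hq1 : q < 1) (n : ℕ) :
    HasSum (fun r ↦ if n ≤ r then q ^ r else 0) (q ^ n / (1 - q)) := by
  rw [← hasSum_nat_add_iff' n, Finset.sum_eq_zero fun r hr ↦ if_neg (by simpa using hr)]
  simp_rw [sub_zero, if_pos (Nat.le_add_left n _), pow_add, mul_comm _ (q ^ n), div_eq_mul_inv]
  exact (hasSum_geometric_of_lt_one hq0 hq1).mul_left _

lemma tsum_ite_le_tsum {f : ℕ → ℝ} (hf₀ : ∀ r, 0 ≤ f r) (hf : Summable f) (p : ℕ → Prop)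
    [DecidablePred p] : ∑' r, (if p r then f r else 0) ≤ ∑' r, f r := by
  have hle r : (if p r then f r else 0) ≤ f r := by split_ifs <;> simp [hf₀]
  have hnonneg r : 0 ≤ (if p r then f r else 0) := by split_ifs <;> simp [hf₀]
  exact (hf.of_nonneg_of_le hnonneg hle).tsum_le_tsum hle hf

lemma tsum_ite_le_geometric {f : ℕ → ℝ} {q : ℝ} {n : ℕ} (hq0 : 0 ≤ q) (hq1 : q < 1)
    (hf : ∀ r, n ≤ r → f r ≤ q ^ r) :
    ∑' r, (if n ≤ r then f r else 0) ≤ q ^ n / (1 - q) := by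
  have hgeom := hasSum_ite_geometric hq0 hq1 n
  by_cases hs : Summable fun r ↦ if n ≤ r then f r else 0
  · refine hs.tsum_le_tsum (fun r ↦ ?_) hgeom.summable |>.trans_eq hgeom.tsum_eq
    split_ifs with hr
    exacts [hf r hr, le_rfl]
  · rw [tsum_eq_zero_of_not_summable hs]
    exact div_nonneg (pow_nonneg hq0 n) (by linarith)

noncomputable def tailTerm (T ε : ℝ) (r : ℕ) : ℝ := T ^ r * ((r : ℝ) / ε) ^ r / (r ! : ℝ) ^ 2

section
variable {T ε : ℝ}

lemma tailTerm_nonneg (hT : 0 ≤ T) (hε : 0 ≤ ε) (r : ℕ) : 0 ≤ tailTerm T ε r := by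
  unfold tailTerm; positivity

lemma tailTerm_le_pow_div_factorial (hT : 0 ≤ T) (hε : 0 < ε) (r : ℕ) :
    tailTerm T ε r ≤ (exp 1 * T / ε) ^ r / r ! :=
  calc tailTerm T ε r = T ^ r * (((r : ℝ) / exp 1) ^ r * (exp 1 / ε) ^ r) / (r ! : ℝ) ^ 2 := by
        rw [tailTerm, ← mul_pow (_ / _), div_mul_div_cancel₀ (exp_pos 1).ne']
    _ ≤ T ^ r * (r ! * (exp 1 / ε) ^ r) / (r ! : ℝ) ^ 2 := by
        gcongr; exact div_exp_one_pow_le_factorial r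
    _ = (exp 1 * T / ε) ^ r / r ! := by
        have : (r ! : ℝ) ≠ 0 := by positivity
        field_simp; ring

lemma summable_tailTerm (hT : 0 ≤ T) (hε : 0 < ε) : Summable (tailTerm T ε) :=
  (summable_pow_div_factorial _).of_nonneg_of_le (tailTerm_nonneg hT hε.le)
    (tailTerm_le_pow_div_factorial hT hε)

lemma tailTerm_le_pow (hT : 0 ≤ T) (hε : 0 < ε) {r : ℕ} (hr : 0 < r) :
    tailTerm T ε r ≤ (exp 1 ^ 2 * T / (ε * r)) ^ r :=
  calc tailTerm T ε r ≤ T ^ r * ((r : ℝ) / ε) ^ r / (((r : ℝ) / exp 1) ^ r) ^ 2 := by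
        unfold tailTerm; gcongr; exact div_exp_one_pow_le_factorial r
    _ = (exp 1 ^ 2 * T / (ε * r)) ^ r := by
        have : (r : ℝ) ≠ 0 := by positivity
        simp only [div_pow, mul_pow]
        field_simp
        ring
end

lemma div_pow_le_exp_neg_mul_log {a D x : ℝ} {n : ℕ} (ha : 0 < a) (hD : 1 ≤ D)
    (haD : a ^ 2 ≤ D) (hx : 0 ≤ x) (hxn : x ≤ n) :
    (a / D) ^ n ≤ exp (-(x / 2 * log D)) := by
  have hlogD : 0 ≤ log D := log_nonneg hD
  have hlog : log (a / D) ≤ -(log D / 2) := by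
    have : 2 * log a ≤ log D := by
      have := log_le_log (by positivity) haD
      rwa [log_pow, Nat.cast_ofNat] at this
    rw [log_div ha.ne' (by positivity)]
    linarith
  calc (a / D) ^ n = exp (n * log (a / D)) := by
        rw [exp_nat_mul, exp_log (by positivity)]
    _ ≤ exp (x * log (a / D)) := exp_le_exp.2 (mul_le_mul_of_nonpos_right hxn (by linarith))
    _ ≤ exp (-(x / 2 * log D)) := exp_le_exp.2 (by nlinarith)

lemma tsum_tailTerm_le_two_mul_exp {T ε D : ℝ} (hT : 0 < T) (hε : 0 < ε) (hD : 1 ≤ D)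
    (h2a : 2 * (exp 1 ^ 2 * T / ε ^ 2) ≤ D) (ha2 : (exp 1 ^ 2 * T / ε ^ 2) ^ 2 ≤ D) :
    ∑' r : ℕ, (if ε * D ≤ r then tailTerm T ε r else 0) ≤ 2 * exp (-(ε / 2 * D * log D)) := by
  set a := exp 1 ^ 2 * T / ε ^ 2
  have ha : 0 < a := by positivity
  have hq : a / D ≤ 1 / 2 := by
    rw [div_le_iff₀ (by positivity)]; linarith
  have hterm : ∀ r, ⌈ε * D⌉₊ ≤ r → tailTerm T ε r ≤ (a / D) ^ r := by
    intro r hr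
    have hεD : ε * D ≤ r := Nat.ceil_le.1 hr
    have hr0 : 0 < r := by exact_mod_cast (by positivity : 0 < ε * D).trans_le hεD
    refine (tailTerm_le_pow hT.le hε hr0).trans (pow_le_pow_left₀ (by positivity) ?_ r)
    rw [div_div, show ε ^ 2 * D = ε * (ε * D) by ring]
    gcongr
  simp_rw [← Nat.ceil_le (a := ε * D)]
  calc _ ≤ (a / D) ^ ⌈ε * D⌉₊ / (1 - a / D) :=
        tsum_ite_le_geometric (by positivity) (by linarith) hterm
    _ ≤ (a / D) ^ ⌈ε * D⌉₊ / (1 / 2) := by gcongr; linarith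
    _ ≤ 2 * exp (-(ε * D / 2 * log D)) := by
        rw [div_div_eq_mul_div, div_one, mul_comm]
        gcongr
        exact div_pow_le_exp_neg_mul_log ha hD ha2 (by positivity) (Nat.le_ceil _)
    _ = 2 * exp (-(ε / 2 * D * log D)) := by ring_nf

lemma exists_mul_exp_bound {F : ℝ → ℝ} {M K c' D₀ : ℝ} (hM₀ : 0 ≤ M) (hK : 0 < K)
    (hc' : 0 ≤ c') (hM : ∀ D, 2 ≤ D → F D ≤ M)
    (hF : ∀ D, D₀ ≤ D → F D ≤ K * exp (-(c' * D * log D))) :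
    ∃ c, 0 < c ∧ ∀ D, 2 ≤ D → F D ≤ c * exp (-(c' * D * log D)) := by
  set D₁ := max D₀ 2
  have hφ : ∀ {D D'}, 1 ≤ D → D ≤ D' → D * log D ≤ D' * log D' := fun h1 h2 ↦
    mul_le_mul h2 (log_le_log (by linarith) h2) (log_nonneg h1) (by linarith)
  have hD₁ : 0 ≤ c' * D₁ * log D₁ := by
    have := hφ one_le_two (le_max_right D₀ 2)
    have : (0 : ℝ) ≤ 2 * log 2 := by positivity
    rw [mul_assoc]; exact mul_nonneg hc' (by linarith)
  refine ⟨(M + K) * exp (c' * D₁ * log D₁), mul_pos (by linarith) (exp_pos _), fun D hD ↦ ?_⟩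
  rw [mul_assoc, ← exp_add]
  rcases le_total D D₁ with h | h
  · refine (hM D hD).trans <| (le_add_of_nonneg_right hK.le).trans <|
      le_mul_of_one_le_right (by linarith) (one_le_exp ?_)
    have := hφ (by linarith) h
    nlinarith
  · refine (hF D ((le_max_left _ _).trans h)).trans ?_
    gcongr
    · linarith
    · linarith

theorem superexponential_tail_bound_general (T : ℝ) (hT : 0 < T) (ε : ℝ) (hε : 0 < ε) :
    ∃ c c' : ℝ, 0 < c ∧ 0 < c' ∧ ∀ D : ℝ, 2 ≤ D →
      (∑' r : ℕ, if ε * D ≤ (r : ℝ) then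
          T ^ r * ((r : ℝ) / ε) ^ r / ((r.factorial : ℝ)) ^ 2 else 0) ≤
        c * Real.exp (-(c' * D * Real.log D)) := by
  set a := exp 1 ^ 2 * T / ε ^ 2
  have hM (D : ℝ) (_ : 2 ≤ D) :
      ∑' r : ℕ, (if ε * D ≤ r then tailTerm T ε r else 0) ≤ ∑' r, tailTerm T ε r :=
    tsum_ite_le_tsum (tailTerm_nonneg hT.le hε.le) (summable_tailTerm hT.le hε) _
  obtain ⟨c, hc, hbound⟩ := exists_mul_exp_bound (tsum_nonneg (tailTerm_nonneg hT.le hε.le))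
    two_pos (by positivity) hM (D₀ := max 1 (max (2 * a) (a ^ 2))) fun D hD ↦
      tsum_tailTerm_le_two_mul_exp hT hε (le_of_max_le_left hD)
        (le_of_max_le_left (le_of_max_le_right hD)) (le_of_max_le_right (le_of_max_le_right hD))
  exact ⟨c, ε / 2, hc, by positivity, hbound⟩

/-- For every `T > 0` and every `ε ∈ (0,1]` there exist constants
`c, c' > 0` such that for every real `D ≥ 2`:
`∑_{r ∈ ℕ, r ≥ εD} Tʳ·(r/ε)ʳ/(r!)² ≤ c·exp(−c'·D·log D)`. -/
theorem superexponential_tail_bound (T : ℝ) (hT : 0 < T) (ε : ℝ) (hε : 0 < ε)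
    (hε1 : ε ≤ 1) :
    ∃ c c' : ℝ, 0 < c ∧ 0 < c' ∧ ∀ D : ℝ, 2 ≤ D →
      (∑' r : ℕ, if ε * D ≤ (r : ℝ) then
          T ^ r * ((r : ℝ) / ε) ^ r / ((r.factorial : ℝ)) ^ 2 else 0) ≤
        c * Real.exp (-(c' * D * Real.log D)) :=
  superexponential_tail_bound_general T hT ε hε
end
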